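/- arXiv:2206.13068 — 3 statements merged into one kernel-verified Lean document; each statement's English description precedes it below -/
import Mathlib

section
/- For n = 2 and the all-ones 2×2 matrix A with δ > 0, the bound z(t) ≤ U₁(δ,t) z(0) + U₂(δ,t) K holds under the hypothesis z'(t) ≤ δ A z(t) + K componentwise with z nonnegative, where U₁(δ,t) = I + ½(e^{2δt} − 1)A and U₂(δ,t) = t(I − ½A) + ((e^{2δt} − 1)/(4δ)) A. -/
/-!
Summing the coordinates reduces the system to the scalar inequality `s' ≤ n δ s + ∑ K` for
`s = ∑ j, z j`, which Grönwall's inequality bounds by `gronwallBound (s 0) (n δ) (∑ K)`.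
Feeding this back into `z i' ≤ δ s + K i` and integrating once more gives the bound on each
coordinate; for `n = 2` it is exactly `U₁ z(0) + U₂ K`.
-/

open Matrix Set

theorem le_gronwallBound_of_hasDerivAt {T c ε : ℝ} {f f' : ℝ → ℝ}
    (hf : ∀ t ∈ Icc 0 T, HasDerivAt f (f' t) t)
    (bound : ∀ t ∈ Icc 0 T, f' t ≤ c * f t + ε) :
    ∀ t ∈ Icc 0 T, f t ≤ gronwallBound (f 0) c ε t := by
  intro t ht
  simpa using le_gronwallBound_of_liminf_deriv_right_le
    (fun x hx ↦ (hf x hx).continuousAt.continuousWithinAt)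
    (fun x hx _ hr ↦ (hf x (Ico_subset_Icc_self hx)).hasDerivWithinAt.liminf_right_slope_le hr)
    le_rfl (fun x hx ↦ bound x (Ico_subset_Icc_self hx)) t ht

section AllOnes

variable {ι : Type*} [Fintype ι]

theorem mulVec_apply_of_forall_eq_one {A : Matrix ι ι ℝ} (hA : ∀ i j, A i j = 1)
    (v : ι → ℝ) (i : ι) : (A *ᵥ v) i = ∑ j, v j := by
  simp [mulVec, dotProduct, hA]

theorem le_of_deriv_le_mul_sum_add {T δ : ℝ} (hδ : 0 ≤ δ) {K : ι → ℝ} {z z' : ℝ → ι → ℝ}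
    (hderiv : ∀ t ∈ Icc 0 T, HasDerivAt z (z' t) t)
    (hz' : ∀ t ∈ Icc 0 T, ∀ i, z' t i ≤ δ * ∑ j, z t j + K i) {t : ℝ} (ht : t ∈ Icc 0 T)
    (i : ι) :
    z t i ≤ z 0 i + (gronwallBound (∑ j, z 0 j) (Fintype.card ι * δ) (∑ j, K j) t
      - ∑ j, z 0 j - (∑ j, K j) * t) / Fintype.card ι + K i * t := by
  set n : ℝ := (Fintype.card ι : ℝ)
  set s₀ := ∑ j, z 0 j
  set κ := ∑ j, K j
  set G := gronwallBound s₀ (n * δ) κ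
  have : Nonempty ι := ⟨i⟩
  have hn : n ≠ 0 := Nat.cast_ne_zero.2 Fintype.card_ne_zero
  have hcoord : ∀ j, ∀ τ ∈ Icc 0 T, HasDerivAt (fun u ↦ z u j) (z' τ j) τ := fun j τ hτ ↦
    hasDerivAt_pi.1 (hderiv τ hτ) j
  have hsum_le : ∀ τ ∈ Icc 0 T, ∑ j, z τ j ≤ G τ := by
    refine le_gronwallBound_of_hasDerivAt (f' := fun τ ↦ ∑ j, z' τ j)
      (fun τ hτ ↦ HasDerivAt.fun_sum fun j _ ↦ hcoord j τ hτ) fun τ hτ ↦ ?_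
    calc ∑ j, z' τ j ≤ ∑ j, (δ * ∑ k, z τ k + K j) := Finset.sum_le_sum fun j _ ↦ hz' τ hτ j
      _ = n * δ * ∑ j, z τ j + κ := by
        rw [Finset.sum_add_distrib, Finset.sum_const, nsmul_eq_mul, Finset.card_univ]; ring
  have hB : ∀ τ, HasDerivAt (fun u ↦ z 0 i + (G u - s₀ - κ * u) / n + K i * u)
      (δ * G τ + K i) τ := by
    intro τ
    refine (((((hasDerivAt_gronwallBound s₀ (n * δ) κ τ).sub_const s₀).sub
      ((hasDerivAt_id τ).const_mul κ)).div_const n |>.const_add (z 0 i)).add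
      ((hasDerivAt_id τ).const_mul (K i))).congr_deriv ?_
    field_simp
    ring
  refine image_le_of_deriv_right_le_deriv_boundary
    (fun x hx ↦ (hcoord i x hx).continuousAt.continuousWithinAt)
    (fun x hx ↦ (hcoord i x (Ico_subset_Icc_self hx)).hasDerivWithinAt)
    (by simp [G, gronwallBound_x0]) (fun x _ ↦ (hB x).continuousAt.continuousWithinAt)
    (fun x _ ↦ (hB x).hasDerivWithinAt) (fun τ hτ ↦ ?_) ht
  have hτ := Ico_subset_Icc_self hτ
  calc z' τ i ≤ δ * ∑ j, z τ j + K i := hz' τ hτ i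
    _ ≤ δ * G τ + K i := by gcongr; exact hsum_le τ hτ

end AllOnes

theorem two_dim_gronwall_bound_general (T δ : ℝ) (hδ : 0 < δ)
    (A : Matrix (Fin 2) (Fin 2) ℝ) (hA : ∀ i j, A i j = 1)
    (K : Fin 2 → ℝ) (z z' : ℝ → Fin 2 → ℝ)
    (hderiv : ∀ t ∈ Set.Icc (0:ℝ) T, HasDerivAt z (z' t) t)
    (hz' : ∀ t ∈ Set.Icc (0:ℝ) T, ∀ i, z' t i ≤ (δ • (A *ᵥ z t)) i + K i) :
    ∀ t ∈ Set.Icc (0:ℝ) T, ∀ i,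
      z t i ≤ (((1 : Matrix (Fin 2) (Fin 2) ℝ)
                  + ((Real.exp (2 * δ * t) - 1) / 2) • A) *ᵥ z 0) i
        + ((t • ((1 : Matrix (Fin 2) (Fin 2) ℝ) - (1/2 : ℝ) • A)
              + ((Real.exp (2 * δ * t) - 1) / (4 * δ)) • A) *ᵥ K) i := by
  intro t ht i
  have hz'sum : ∀ t ∈ Icc 0 T, ∀ i, z' t i ≤ δ * ∑ j, z t j + K i := by
    simpa only [Pi.smul_apply, smul_eq_mul, mulVec_apply_of_forall_eq_one hA] using hz'
  have hzi := le_of_deriv_le_mul_sum_add hδ.le hderiv hz'sum ht i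
  simp only [Fintype.card_fin, Nat.cast_ofNat, Fin.sum_univ_two] at hzi
  simp only [add_mulVec, sub_mulVec, smul_mulVec, one_mulVec, Pi.add_apply, Pi.sub_apply,
    Pi.smul_apply, smul_eq_mul, mulVec_apply_of_forall_eq_one hA, Fin.sum_univ_two]
  rw [gronwallBound_of_K_ne_0 (by positivity)] at hzi
  convert hzi using 1
  field_simp
  ring

/-- For n = 2 and the all-ones 2×2 matrix A with δ > 0:
    z(t) ≤ U₁(δ,t) z(0) + U₂(δ,t) K componentwise, where
    U₁(δ,t) = I + ½(e^{2δt} − 1)A and U₂(δ,t) = t(I − ½A) + ((e^{2δt} − 1)/(4δ))A. -/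
theorem two_dim_gronwall_bound (T δ : ℝ) (hT : 0 < T) (hδ : 0 < δ)
    (A : Matrix (Fin 2) (Fin 2) ℝ) (hA : ∀ i j, A i j = 1)
    (K : Fin 2 → ℝ) (z z' : ℝ → Fin 2 → ℝ)
    (hderiv : ∀ t ∈ Set.Icc (0:ℝ) T, HasDerivAt z (z' t) t)
    (hznonneg : ∀ t ∈ Set.Icc (0:ℝ) T, ∀ i, 0 ≤ z t i)
    (hz' : ∀ t ∈ Set.Icc (0:ℝ) T, ∀ i, z' t i ≤ (δ • (A *ᵥ z t)) i + K i) :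
    ∀ t ∈ Set.Icc (0:ℝ) T, ∀ i,
      z t i ≤ (((1 : Matrix (Fin 2) (Fin 2) ℝ)
                  + ((Real.exp (2 * δ * t) - 1) / 2) • A) *ᵥ z 0) i
        + ((t • ((1 : Matrix (Fin 2) (Fin 2) ℝ) - (1/2 : ℝ) • A)
              + ((Real.exp (2 * δ * t) - 1) / (4 * δ)) • A) *ᵥ K) i :=
  two_dim_gronwall_bound_general T δ hδ A hA K z z' hderiv hz'
end

section
/- Oscillatory integral order estimate: if ρ ∈ C^{n+1}([0,1]) with ρ^{(i)}(0) = ρ^{(i)}(1) = 0 for i = 1,…,n and ρ(0) = 0, ρ(1) = 1, then for ε > 0, k ∈ ℤ with |kε − 1| ≥ c₀ > 0, the integral ∫_0^T e^{(−i/ε + ik)t} ρ(t/T) dt equals (ε/(i(kε−1))) e^{(−i/ε + ik)T} plus a remainder bounded in modulus by C ε^{n+1}, where C depends only on ρ, T, c₀, n. -/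
/-!
Write the phase as `-i/ε + ik = i r` with `r = (kε - 1)/ε`, so that `|r| ≥ c₀/ε`. After the
substitution `t = T s`, integrate by parts against `e^{irTs}` on `[0, 1]` `n + 1` times, each time
gaining a factor `-1/(irT)`. The first step leaves the boundary term `e^{irT}/(ir)` (as `ρ 0 = 0`,
`ρ 1 = 1`), the later ones leave none because `ρ⁽ⁱ⁾` vanishes at both ends, and the remaining
integral of `e^{irTs} ρ⁽ⁿ⁺¹⁾(s)` is bounded by `sup |ρ⁽ⁿ⁺¹⁾|`. Hence the error is at most
`T sup |ρ⁽ⁿ⁺¹⁾| / (|r| T)^{n+1} ≤ C ε^{n+1}`.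
-/

open Complex

lemma integral_cexp_mul_eq_sub {a b : ℝ} {ν : ℂ} (hν : ν ≠ 0) {u u' : ℝ → ℂ}
    (hu : ∀ t ∈ Set.uIcc a b, HasDerivAt u (u' t) t)
    (hu' : IntervalIntegrable u' MeasureTheory.volume a b) :
    ∫ t in a..b, exp (ν * t) * u t
      = (exp (ν * b) * u b - exp (ν * a) * u a) / ν - ν⁻¹ * ∫ t in a..b, exp (ν * t) * u' t := by
  have hv : ∀ t : ℝ, HasDerivAt (fun s : ℝ => exp (ν * s) / ν) (exp (ν * t)) t := by
    intro t
    have := (((hasDerivAt_id t).ofReal_comp.const_mul ν).cexp).div_const ν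
    simpa [mul_div_cancel_right₀ _ hν] using this
  have hexp : Continuous fun t : ℝ => exp (ν * t) := by fun_prop
  have := intervalIntegral.integral_mul_deriv_eq_deriv_mul hu (fun t _ => hv t) hu'
    (hexp.intervalIntegrable a b)
  simp_rw [mul_comm (exp _), this, mul_div_assoc', ← intervalIntegral.integral_const_mul]
  field_simp

lemma integral_cexp_mul_iteratedDeriv_eq_sub {f : ℝ → ℝ} {n m : ℕ} (hf : ContDiff ℝ (n + 1) f)
    (hm : m ≤ n) {ν : ℂ} (hν : ν ≠ 0) (a b : ℝ) :
    ∫ t in a..b, exp (ν * t) * iteratedDeriv m f t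
      = (exp (ν * b) * iteratedDeriv m f b - exp (ν * a) * iteratedDeriv m f a) / ν
        - ν⁻¹ * ∫ t in a..b, exp (ν * t) * iteratedDeriv (m + 1) f t := by
  refine integral_cexp_mul_eq_sub hν (fun t _ => ?_) ?_
  · rw [iteratedDeriv_succ]
    have hdiff := hf.differentiable_iteratedDeriv m (by exact_mod_cast Nat.lt_succ_of_le hm)
    exact (hdiff t).hasDerivAt.ofReal_comp
  · have hcont := hf.continuous_iteratedDeriv (m + 1) (by exact_mod_cast Nat.succ_le_succ hm)
    exact (continuous_ofReal.comp hcont).intervalIntegrable a b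

lemma integral_cexp_mul_eq_of_iteratedDeriv_eq_zero {f : ℝ → ℝ} {n : ℕ}
    (hf : ContDiff ℝ (n + 1) f) {a b : ℝ}
    (hab : ∀ i, 1 ≤ i → i ≤ n → iteratedDeriv i f a = 0 ∧ iteratedDeriv i f b = 0)
    {ν : ℂ} (hν : ν ≠ 0) :
    ∫ t in a..b, exp (ν * t) * f t
      = (exp (ν * b) * f b - exp (ν * a) * f a) / ν
        + (-ν⁻¹) ^ (n + 1) * ∫ t in a..b, exp (ν * t) * iteratedDeriv (n + 1) f t := by
  suffices ∀ m ≤ n, ∫ t in a..b, exp (ν * t) * f t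
      = (exp (ν * b) * f b - exp (ν * a) * f a) / ν
        + (-ν⁻¹) ^ (m + 1) * ∫ t in a..b, exp (ν * t) * iteratedDeriv (m + 1) f t from
    this n le_rfl
  intro m hm
  induction m with
  | zero =>
    simpa [sub_eq_add_neg] using integral_cexp_mul_iteratedDeriv_eq_sub hf n.zero_le hν a b
  | succ m ih =>
    obtain ⟨ha, hb⟩ := hab (m + 1) m.succ_pos hm
    rw [ih (by omega), integral_cexp_mul_iteratedDeriv_eq_sub hf hm hν, ha, hb, ofReal_zero]
    ring

lemma norm_integral_cexp_mul_le_of_re_eq_zero {a b M : ℝ} {ν : ℂ} (hν : ν.re = 0) {g : ℝ → ℂ}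
    (hg : ∀ t ∈ Set.uIoc a b, ‖g t‖ ≤ M) :
    ‖∫ t in a..b, exp (ν * t) * g t‖ ≤ M * |b - a| := by
  refine intervalIntegral.norm_integral_le_of_norm_le_const fun t ht => ?_
  rw [norm_mul, norm_exp]
  simpa [hν] using hg t ht

lemma integral_cexp_mul_comp_div (ν : ℂ) (f : ℝ → ℂ) {T : ℝ} (hT : T ≠ 0) :
    ∫ t in (0:ℝ)..T, exp (ν * t) * f (t / T)
      = T * ∫ s in (0:ℝ)..1, exp (ν * T * s) * f s := by
  have := intervalIntegral.integral_comp_div (fun s : ℝ => exp (ν * T * s) * f s) hT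
    (a := 0) (b := T)
  rw [zero_div, div_self hT, real_smul] at this
  rw [← this]
  congr with t
  rw [ofReal_div, mul_assoc ν, mul_div_cancel₀ _ (ofReal_ne_zero.2 hT)]

lemma norm_integral_cexp_mul_comp_div_sub_le {ρ : ℝ → ℝ} {n : ℕ} (hρ : ContDiff ℝ (n + 1) ρ)
    (hord : ∀ i, 1 ≤ i → i ≤ n → iteratedDeriv i ρ 0 = 0 ∧ iteratedDeriv i ρ 1 = 0)
    (hρ0 : ρ 0 = 0) (hρ1 : ρ 1 = 1) {M : ℝ}
    (hM : ∀ s ∈ Set.Icc (0:ℝ) 1, |iteratedDeriv (n + 1) ρ s| ≤ M)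
    {T : ℝ} (hT : 0 < T) {r : ℝ} (hr : r ≠ 0) :
    ‖(∫ t in (0:ℝ)..T, exp (I * r * t) * (ρ (t / T) : ℂ)) - (I * r)⁻¹ * exp (I * r * T)‖
      ≤ M * T / (|r| * T) ^ (n + 1) := by
  have hν : I * r * T ≠ 0 := by simp [hr, hT.ne']
  set R := ∫ s in (0:ℝ)..1, exp (I * r * T * s) * ((iteratedDeriv (n + 1) ρ s : ℝ) : ℂ)
  have hR : ‖R‖ ≤ M := by
    have := norm_integral_cexp_mul_le_of_re_eq_zero (a := 0) (b := 1) (ν := I * r * T) (by simp)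
      (g := fun s => ((iteratedDeriv (n + 1) ρ s : ℝ) : ℂ)) fun s hs => by
        rw [Set.uIoc_of_le zero_le_one] at hs
        simpa using hM s (Set.Ioc_subset_Icc_self hs)
    simpa using this
  have hrem : (∫ t in (0:ℝ)..T, exp (I * r * t) * (ρ (t / T) : ℂ)) - (I * r)⁻¹ * exp (I * r * T)
      = T * (-(I * r * T)⁻¹) ^ (n + 1) * R := by
    rw [integral_cexp_mul_comp_div _ (fun s => (ρ s : ℂ)) hT.ne',
      integral_cexp_mul_eq_of_iteratedDeriv_eq_zero hρ hord hν, hρ0, hρ1]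
    simp only [R, ofReal_zero, ofReal_one, mul_zero, mul_one, sub_zero]
    have : (T : ℂ) ≠ 0 := ofReal_ne_zero.2 hT.ne'
    field_simp
    ring
  have hν_norm : ‖I * r * T‖ = |r| * T := by simp [abs_of_pos hT]
  rw [hrem, norm_mul, norm_mul, norm_pow, norm_neg, norm_inv, hν_norm, norm_real,
    Real.norm_of_nonneg hT.le, inv_pow]
  calc T * ((|r| * T) ^ (n + 1))⁻¹ * ‖R‖ ≤ T * ((|r| * T) ^ (n + 1))⁻¹ * M := by gcongr
    _ = M * T / (|r| * T) ^ (n + 1) := by ring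

lemma neg_I_div_add_I_mul_eq {ε : ℝ} (hε : ε ≠ 0) (k : ℤ) :
    -I / ε + I * k = I * (((k : ℝ) * ε - 1) / ε : ℝ) := by
  have : (ε : ℂ) ≠ 0 := ofReal_ne_zero.2 hε
  push_cast
  field_simp
  ring

lemma div_I_mul_sub_one_eq_inv {ε : ℝ} (hε : ε ≠ 0) {k : ℤ} (hkε : (k : ℝ) * ε - 1 ≠ 0) :
    (ε : ℂ) / (I * (k * ε - 1)) = (I * (((k : ℝ) * ε - 1) / ε : ℝ))⁻¹ := by
  have : (ε : ℂ) ≠ 0 := ofReal_ne_zero.2 hε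
  have : (k : ℂ) * ε - 1 ≠ 0 := by exact_mod_cast hkε
  push_cast
  field_simp

/-- Oscillatory integral order estimate: under the algebraic order condition of
    order n, the ramped oscillatory integral equals (ε/(i(kε−1))) e^{(−i/ε+ik)T}
    plus a remainder of size O(ε^{n+1}), uniformly over ε > 0 and k ∈ ℤ with
    |kε − 1| ≥ c₀. -/
theorem oscillatory_integral_order_estimate
    (T c₀ : ℝ) (n : ℕ) (hT : 0 < T) (hc₀ : 0 < c₀)
    (ρ : ℝ → ℝ) (hρ : ContDiff ℝ (n + 1) ρ)
    (hord : ∀ i : ℕ, 1 ≤ i → i ≤ n →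
      iteratedDeriv i ρ 0 = 0 ∧ iteratedDeriv i ρ 1 = 0)
    (hρ0 : ρ 0 = 0) (hρ1 : ρ 1 = 1) :
    ∃ C > 0, ∀ ε : ℝ, 0 < ε → ∀ k : ℤ, c₀ ≤ |(k : ℝ) * ε - 1| →
      ‖(∫ t in (0:ℝ)..T,
            Complex.exp ((-Complex.I / ε + Complex.I * k) * t) * (ρ (t / T) : ℂ))
          - (ε : ℂ) / (Complex.I * ((k : ℂ) * ε - 1))
              * Complex.exp ((-Complex.I / ε + Complex.I * k) * T)‖
        ≤ C * ε ^ (n + 1) := by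
  obtain ⟨M, hM⟩ := (isCompact_Icc (a := (0:ℝ)) (b := 1)).exists_bound_of_continuousOn
    (hρ.continuous_iteratedDeriv (n + 1) le_rfl).continuousOn
  refine ⟨max M 1 * T / (c₀ * T) ^ (n + 1), by positivity, fun ε hε k hk => ?_⟩
  have hkε : (k : ℝ) * ε - 1 ≠ 0 := fun h => by
    rw [h, abs_zero] at hk
    exact hc₀.not_ge hk
  set r := ((k : ℝ) * ε - 1) / ε
  have hr : c₀ / ε ≤ |r| := by
    rw [abs_div, abs_of_pos hε]
    gcongr
  rw [neg_I_div_add_I_mul_eq hε.ne', div_I_mul_sub_one_eq_inv hε.ne' hkε]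
  calc _ ≤ max M 1 * T / (|r| * T) ^ (n + 1) :=
        norm_integral_cexp_mul_comp_div_sub_le hρ hord hρ0 hρ1
          (fun s hs => (hM s hs).trans (le_max_left _ _)) hT (div_ne_zero hkε hε.ne')
    _ ≤ max M 1 * T / (c₀ / ε * T) ^ (n + 1) := by gcongr
    _ = max M 1 * T / (c₀ * T) ^ (n + 1) * ε ^ (n + 1) := by
      rw [div_mul_eq_mul_div, div_pow, div_div_eq_mul_div]
      ring
end

section
/- Two-component contraction across a nudging cycle: suppose nonnegative functions u, v : [0,T] → ℝ (representing ∥q⁺−q⁻∥ and ∥w⁺−w⁻∥) are differentiable with u(0) = 0, and satisfy u' ≤ δ(u + v) and v' ≤ δ(u + v) + κ for constants δ, κ > 0. Then u(T) ≤ ½(e^{2δT} − 1) v(0) + κ (e^{2δT} − 2δT − 1)/(4δ). -/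
/-! The sum `s = u + v` satisfies `s' ≤ 2δ s + κ` with `s 0 = v 0`, so Grönwall bounds it by
`g = gronwallBound (v 0) (2δ) κ`. Then `u' ≤ δ g`, and since `g' = 2δ g + κ` the function
`(g t - κ t - v 0) / 2` is a primitive of `δ g` vanishing at `0`; comparing `u` with it gives the
bound at `T`. -/

open Set

theorem image_le_of_hasDerivAt_le_hasDerivAt {f f' B B' : ℝ → ℝ} {a b : ℝ}
    (hf : ∀ x ∈ Icc a b, HasDerivAt f (f' x) x) (hB : ∀ x ∈ Icc a b, HasDerivAt B (B' x) x)
    (ha : f a ≤ B a) (bound : ∀ x ∈ Icc a b, f' x ≤ B' x) :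
    ∀ x ∈ Icc a b, f x ≤ B x := fun _ hx =>
  image_le_of_deriv_right_le_deriv_boundary
    (fun x hx => (hf x hx).continuousAt.continuousWithinAt)
    (fun x hx => (hf x (Ico_subset_Icc_self hx)).hasDerivWithinAt) ha
    (fun x hx => (hB x hx).continuousAt.continuousWithinAt)
    (fun x hx => (hB x (Ico_subset_Icc_self hx)).hasDerivWithinAt)
    (fun x hx => bound x (Ico_subset_Icc_self hx)) hx

theorem le_gronwallBound_of_hasDerivAt_le {f f' : ℝ → ℝ} {δ K ε a b : ℝ}
    (hf : ∀ x ∈ Icc a b, HasDerivAt f (f' x) x) (ha : f a ≤ δ)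
    (bound : ∀ x ∈ Icc a b, f' x ≤ K * f x + ε) :
    ∀ x ∈ Icc a b, f x ≤ gronwallBound δ K ε (x - a) :=
  le_gronwallBound_of_liminf_deriv_right_le
    (fun x hx => (hf x hx).continuousAt.continuousWithinAt)
    (fun x hx _ hr => (hf x (Ico_subset_Icc_self hx)).hasDerivWithinAt.liminf_right_slope_le hr)
    ha (fun x hx => bound x (Ico_subset_Icc_self hx))

theorem hasDerivAt_gronwallBound_sub_mul (δ K ε x : ℝ) :
    HasDerivAt (fun y => gronwallBound δ K ε y - ε * y) (K * gronwallBound δ K ε x) x :=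
  ((hasDerivAt_gronwallBound δ K ε x).sub ((hasDerivAt_id x).const_mul ε)).congr_deriv
    (by ring)

theorem two_component_contraction_general (T δ κ : ℝ) (hT : 0 < T) (hδ : 0 < δ)
    (u v u' v' : ℝ → ℝ)
    (hu : ∀ t ∈ Set.Icc (0:ℝ) T, HasDerivAt u (u' t) t)
    (hv : ∀ t ∈ Set.Icc (0:ℝ) T, HasDerivAt v (v' t) t)
    (hu0 : u 0 = 0)
    (hu' : ∀ t ∈ Set.Icc (0:ℝ) T, u' t ≤ δ * (u t + v t))
    (hv' : ∀ t ∈ Set.Icc (0:ℝ) T, v' t ≤ δ * (u t + v t) + κ) :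
    u T ≤ (Real.exp (2 * δ * T) - 1) / 2 * v 0
      + κ * (Real.exp (2 * δ * T) - 2 * δ * T - 1) / (4 * δ) := by
  set g := gronwallBound (v 0) (2 * δ) κ
  have hsum : ∀ t ∈ Icc 0 T, u t + v t ≤ g t := by
    simpa using le_gronwallBound_of_hasDerivAt_le (f := fun t => u t + v t)
      (fun t ht => (hu t ht).add (hv t ht)) (by simp [hu0])
      fun t ht => by linarith [hu' t ht, hv' t ht]
  have hprimitive (t : ℝ) : HasDerivAt (fun t => (g t - κ * t - v 0) / 2) (δ * g t) t :=
    (((hasDerivAt_gronwallBound_sub_mul (v 0) (2 * δ) κ t).sub_const (v 0)).div_const 2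
      ).congr_deriv (by ring)
  have huT := image_le_of_hasDerivAt_le_hasDerivAt hu (fun t _ => hprimitive t)
    (by simp [g, hu0, gronwallBound_x0])
    (fun t ht => (hu' t ht).trans (mul_le_mul_of_nonneg_left (hsum t ht) hδ.le))
    T (right_mem_Icc.2 hT.le)
  have hgT : g T = v 0 * Real.exp (2 * δ * T) + κ / (2 * δ) * (Real.exp (2 * δ * T) - 1) := by
    simp [g, gronwallBound_of_K_ne_0 (by positivity : 2 * δ ≠ 0)]
  rw [hgT] at huT
  convert huT using 1
  field_simp
  ring

/-- Two-component contraction across a nudging cycle: if u, v ≥ 0 on [0,T] are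
    differentiable with u(0) = 0, u' ≤ δ(u+v) and v' ≤ δ(u+v) + κ, then
    u(T) ≤ ½(e^{2δT} − 1) v(0) + κ (e^{2δT} − 2δT − 1)/(4δ). -/
theorem two_component_contraction (T δ κ : ℝ) (hT : 0 < T) (hδ : 0 < δ) (hκ : 0 < κ)
    (u v u' v' : ℝ → ℝ)
    (hu : ∀ t ∈ Set.Icc (0:ℝ) T, HasDerivAt u (u' t) t)
    (hv : ∀ t ∈ Set.Icc (0:ℝ) T, HasDerivAt v (v' t) t)
    (hupos : ∀ t ∈ Set.Icc (0:ℝ) T, 0 ≤ u t)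
    (hvpos : ∀ t ∈ Set.Icc (0:ℝ) T, 0 ≤ v t)
    (hu0 : u 0 = 0)
    (hu' : ∀ t ∈ Set.Icc (0:ℝ) T, u' t ≤ δ * (u t + v t))
    (hv' : ∀ t ∈ Set.Icc (0:ℝ) T, v' t ≤ δ * (u t + v t) + κ) :
    u T ≤ (Real.exp (2 * δ * T) - 1) / 2 * v 0
      + κ * (Real.exp (2 * δ * T) - 2 * δ * T - 1) / (4 * δ) :=
  two_component_contraction_general T δ κ hT hδ u v u' v' hu hv hu0 hu' hv'
end
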